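/- arXiv:1702.05979 — 4 statements merged into one kernel-verified Lean document; each statement's English description precedes it below -/
import Mathlib

section
/- Let F : ℝ^N × [0,b) → ℝ^N satisfy the Kamke–Müller condition and F(0,x)=0, and suppose there is a constant C > 0 such that max_k F_k(w,x) ≤ C‖w‖_∞ for all w in the nonnegative cone ℝ^N_+ and x ∈ [0,b). If w : [0,b) → ℝ^N is a nonnegative lower solution of w' = F(w,x), then ‖w(x)‖_∞ ≤ ‖w(0)‖_∞ e^{Cb} for all x ∈ [0,b). -/
open Set MeasureTheory Filter

/-- Joining two Lipschitz pieces at a common point. -/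
lemma lipschitzOnWith_join {f : ℝ → ℝ} {K₁ K₂ : NNReal} {a m b : ℝ}
    (h₁ : LipschitzOnWith K₁ f (Icc a m)) (h₂ : LipschitzOnWith K₂ f (Icc m b)) :
    LipschitzOnWith (K₁ + K₂) f (Icc a b) := by
  rw [lipschitzOnWith_iff_dist_le_mul] at h₁ h₂ ⊢
  have main : ∀ x ∈ Icc a b, ∀ y ∈ Icc a b, x ≤ y → dist (f x) (f y) ≤ (K₁ + K₂) * dist x y := by
    intro x hx y hy hxy
    rcases le_total y m with hym | hmy
    · calc dist (f x) (f y) ≤ K₁ * dist x y := h₁ x ⟨hx.1, hxy.trans hym⟩ y ⟨hy.1, hym⟩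
        _ ≤ (K₁ + K₂) * dist x y := by
            have := dist_nonneg (x := x) (y := y); push_cast; nlinarith [NNReal.coe_nonneg K₂]
    rcases le_total x m with hxm | hmx
    · have hmab : m ∈ Icc a m := ⟨hx.1.trans hxm, le_refl m⟩
      calc dist (f x) (f y) ≤ dist (f x) (f m) + dist (f m) (f y) := dist_triangle _ _ _
        _ ≤ K₁ * dist x m + K₂ * dist m y :=
            add_le_add (h₁ x ⟨hx.1, hxm⟩ m hmab) (h₂ m ⟨le_refl m, hmy.trans hy.2⟩ y ⟨hmy, hy.2⟩)
        _ ≤ (K₁ + K₂) * dist x y := by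
            rw [Real.dist_eq, Real.dist_eq, Real.dist_eq,
              abs_of_nonpos (by linarith), abs_of_nonpos (by linarith),
              abs_of_nonpos (by linarith)]
            push_cast; nlinarith [NNReal.coe_nonneg K₁, NNReal.coe_nonneg K₂]
    · calc dist (f x) (f y) ≤ K₂ * dist x y := h₂ x ⟨hmx, hx.2⟩ y ⟨hmx.trans hxy, hy.2⟩
        _ ≤ (K₁ + K₂) * dist x y := by
            have := dist_nonneg (x := x) (y := y); push_cast; nlinarith [NNReal.coe_nonneg K₁]
  intro x hx y hy
  rcases le_total x y with h | h
  · exact main x hx y hy h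
  · rw [dist_comm, dist_comm x y]; exact main y hy x hx h

/-- A locally Lipschitz real function is Lipschitz on each compact interval. -/
lemma LocallyLipschitz.exists_lipschitzOnWith_Icc {f : ℝ → ℝ} (hf : LocallyLipschitz f)
    (u v : ℝ) : ∃ K : NNReal, LipschitzOnWith K f (Icc u v) := by
  rcases lt_or_ge v u with h | huv
  · exact ⟨0, by simp [Icc_eq_empty_of_lt h]⟩
  set S : Set ℝ := {t | t ∈ Icc u v ∧ ∃ K : NNReal, LipschitzOnWith K f (Icc u t)} with hS
  have hu : u ∈ S := ⟨⟨le_refl u, huv⟩, 0, by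
    intro p hp q hq
    simp only [Icc_self, mem_singleton_iff] at hp hq
    simp [hp, hq]⟩
  have hbdd : BddAbove S := ⟨v, fun t ht => ht.1.2⟩
  have hne : S.Nonempty := ⟨u, hu⟩
  set c := sSup S with hc
  have hcu : u ≤ c := le_csSup hbdd hu
  have hcv : c ≤ v := csSup_le hne fun t ht => ht.1.2
  obtain ⟨K₀, t, ht, hK₀⟩ := hf c
  obtain ⟨ε, hε, hball⟩ := Metric.mem_nhds_iff.1 ht
  have hsub : Icc (c - ε/2) (c + ε/2) ⊆ t := fun s hs => hball (by
    simp only [Metric.mem_ball, Real.dist_eq]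
    rw [abs_sub_lt_iff]; constructor <;> [linarith [hs.2]; linarith [hs.1]])
  have hK₀' : LipschitzOnWith K₀ f (Icc (c - ε/2) (c + ε/2)) := hK₀.mono hsub
  obtain ⟨s, hsS, hslt⟩ : ∃ s ∈ S, c - ε/2 < s := exists_lt_of_lt_csSup hne (by linarith)
  obtain ⟨⟨hsu, _⟩, K, hKlip⟩ := hsS
  have hjoin : LipschitzOnWith (K + K₀) f (Icc u (c + ε/2)) :=
    lipschitzOnWith_join hKlip
      (hK₀'.mono (Icc_subset_Icc hslt.le (le_refl _)))
  have htS : min v (c + ε/2) ∈ S := by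
    refine ⟨⟨le_min (hcu.trans hcv) (by linarith), min_le_left _ _⟩, K + K₀, ?_⟩
    exact hjoin.mono (Icc_subset_Icc (le_refl _) (min_le_right _ _))
  have hle : min v (c + ε/2) ≤ c := le_csSup hbdd htS
  have hvc : v ≤ c := by
    by_contra hvc
    push_neg at hvc
    have : c < min v (c + ε/2) := lt_min hvc (by linarith)
    linarith
  have hcv' : c = v := le_antisymm hcv hvc
  have : min v (c + ε/2) = v := min_eq_left (by linarith)
  rw [this] at htS
  exact htS.2


/-- For a monotone continuous function, the (a.e. defined) derivative is given by the RN
derivative of the Stieltjes measure, and its integral is bounded by the increment. -/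
lemma monotone_continuous_integral_rnDeriv_le {f : ℝ → ℝ} (hm : Monotone f)
    (hc : Continuous f) {a c : ℝ} (hac : a ≤ c) :
    IntegrableOn (fun t => (hm.stieltjesFunction.measure.rnDeriv volume t).toReal) (Ioc a c) ∧
    ∫ t in Ioc a c, (hm.stieltjesFunction.measure.rnDeriv volume t).toReal ≤ f c - f a := by
  set μ := hm.stieltjesFunction.measure with hμ
  set ρ : ℝ → ℝ := fun t => (μ.rnDeriv volume t).toReal with hρ
  have hst : ∀ x : ℝ, hm.stieltjesFunction x = f x := by
    intro x
    rw [hm.stieltjesFunction_eq]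
    exact rightLim_eq_of_tendsto
      ((hc.tendsto x).mono_left nhdsWithin_le_nhds)
  have hμIoc : μ (Ioc a c) = ENNReal.ofReal (f c - f a) := by
    rw [hμ, StieltjesFunction.measure_Ioc, hst, hst]
  have hmeas : Measurable ρ := (Measure.measurable_rnDeriv μ volume).ennreal_toReal
  have hlin : ∫⁻ t in Ioc a c, ENNReal.ofReal (ρ t) ∂volume ≤ ENNReal.ofReal (f c - f a) := by
    calc ∫⁻ t in Ioc a c, ENNReal.ofReal (ρ t) ∂volume
        ≤ ∫⁻ t in Ioc a c, μ.rnDeriv volume t ∂volume :=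
          lintegral_mono fun t => ENNReal.ofReal_toReal_le
      _ ≤ μ (Ioc a c) := Measure.setLIntegral_rnDeriv_le _
      _ = ENNReal.ofReal (f c - f a) := hμIoc
  have hnn : ∀ t, 0 ≤ ρ t := fun t => ENNReal.toReal_nonneg
  have hint : IntegrableOn ρ (Ioc a c) := by
    refine ⟨(hmeas.aestronglyMeasurable).restrict, ?_⟩
    rw [hasFiniteIntegral_iff_norm]
    calc ∫⁻ t in Ioc a c, ENNReal.ofReal ‖ρ t‖ ∂volume
        = ∫⁻ t in Ioc a c, ENNReal.ofReal (ρ t) ∂volume := by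
          congr 1; ext t; rw [Real.norm_eq_abs, abs_of_nonneg (hnn t)]
      _ ≤ ENNReal.ofReal (f c - f a) := hlin
      _ < ⊤ := ENNReal.ofReal_lt_top
  refine ⟨hint, ?_⟩
  rw [integral_eq_lintegral_of_nonneg_ae (Eventually.of_forall hnn)
    (hmeas.aestronglyMeasurable).restrict]
  calc (∫⁻ t in Ioc a c, ENNReal.ofReal (ρ t) ∂volume).toReal
      ≤ (ENNReal.ofReal (f c - f a)).toReal :=
        ENNReal.toReal_mono ENNReal.ofReal_ne_top hlin
    _ ≤ f c - f a := by rw [ENNReal.toReal_ofReal (sub_nonneg.2 (hm hac))]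

/-- A nonnegative lower solution of a cooperative system with linear growth bound
satisfies the exponential a priori estimate. -/
theorem lower_solution_growth_bound {N : ℕ} {b C : ℝ} (hC : 0 < C)
    (F : (Fin N → ℝ) → ℝ → (Fin N → ℝ))
    (hKM : ∀ x ∈ Ico (0:ℝ) b, ∀ u v : Fin N → ℝ, u ≤ v → ∀ k, u k = v k →
      F u x k ≤ F v x k)
    (hF0 : ∀ x ∈ Ico (0:ℝ) b, F 0 x = 0)
    (hgrow : ∀ x ∈ Ico (0:ℝ) b, ∀ w : Fin N → ℝ, 0 ≤ w → ∀ k, F w x k ≤ C * ‖w‖)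
    (w w' : ℝ → Fin N → ℝ)
    (hw : LocallyLipschitz w)
    (hnonneg : ∀ x ∈ Ico (0:ℝ) b, 0 ≤ w x)
    (hderiv : ∀ᵐ x ∂(volume.restrict (Ico (0:ℝ) b)),
      (∀ i, HasDerivAt (fun t => w t i) (w' x i) x) ∧ w' x ≤ F (w x) x) :
    ∀ x ∈ Ico (0:ℝ) b, ‖w x‖ ≤ ‖w 0‖ * Real.exp (C * b) := by
  intro x hx
  rcases Nat.eq_zero_or_pos N with hN | hN
  · subst hN
    have hwx : w x = 0 := Subsingleton.elim _ _
    rw [hwx, norm_zero]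
    positivity
  obtain ⟨hx0, hxb⟩ := hx
  set g : ℝ → ℝ := fun t => ‖w t‖ with hgdef
  have hgl : LocallyLipschitz g :=
    LocallyLipschitz.comp (lipschitzWith_one_norm).locallyLipschitz hw
  have hgc : Continuous g := hgl.continuous
  have hgnn : ∀ t, 0 ≤ g t := fun t => norm_nonneg _
  -- clamp onto [0, x]
  set clamp : ℝ → ℝ := fun t => max 0 (min t x) with hclampdef
  have hclip : LipschitzWith 1 clamp := by
    apply LipschitzWith.of_dist_le_mul
    intro s t
    simp only [Real.dist_eq, NNReal.coe_one, one_mul, hclampdef]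
    calc |max 0 (min s x) - max 0 (min t x)| = |max (min s x) 0 - max (min t x) 0| := by
          rw [max_comm 0 _, max_comm 0 _]
      _ ≤ |min s x - min t x| := abs_max_sub_max_le_abs _ _ _
      _ ≤ max |s - t| |x - x| := abs_min_sub_min_le_max _ _ _ _
      _ ≤ |s - t| := by simp
  have hclamp_mem : ∀ t, clamp t ∈ Icc 0 x := fun t =>
    ⟨le_max_left _ _, max_le hx0 (min_le_right _ _)⟩
  have hclamp_id : ∀ t ∈ Icc 0 x, clamp t = t := by
    intro t ht
    simp only [hclampdef]
    rw [min_eq_left ht.2, max_eq_right ht.1]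
  obtain ⟨K, hK⟩ := hgl.exists_lipschitzOnWith_Icc 0 x
  set G : ℝ → ℝ := fun t => g (clamp t) with hGdef
  have hGlip : LipschitzWith K G := by
    have h1 : LipschitzOnWith (K * 1) G univ :=
      hK.comp hclip.lipschitzOnWith (fun t _ => hclamp_mem t)
    rw [lipschitzOnWith_univ, mul_one] at h1
    exact h1
  have hGeq : ∀ t ∈ Icc 0 x, G t = g t := fun t ht => by
    simp only [hGdef]; rw [hclamp_id t ht]
  -- the monotone companion
  set h : ℝ → ℝ := fun t => (K : ℝ) * t - G t with hhdef
  have hmono : Monotone h := by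
    intro s t hst
    have hd := hGlip.dist_le_mul s t
    rw [Real.dist_eq, Real.dist_eq] at hd
    have h1 := (abs_le.1 hd).2
    have h2 := neg_le_of_abs_le hd
    simp only [hhdef]
    have : |s - t| = t - s := by rw [abs_sub_comm, abs_of_nonneg (by linarith)]
    rw [this] at hd
    have := (abs_le.1 hd).2
    nlinarith [NNReal.coe_nonneg K]
  have hcont : Continuous h :=
    (continuous_const.mul continuous_id).sub hGlip.continuous
  set ρ : ℝ → ℝ := fun t => (hmono.stieltjesFunction.measure.rnDeriv volume t).toReal with hρdef
  -- the a.e. differential inequality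
  have hae : ∀ᵐ t ∂(volume.restrict (Ioc 0 x)), (K : ℝ) - C * g t ≤ ρ t := by
    have hsub : Ioc (0:ℝ) x ⊆ Ico (0:ℝ) b := fun t ht => ⟨ht.1.le, lt_of_le_of_lt ht.2 hxb⟩
    have h1 : ∀ᵐ t ∂(volume.restrict (Ioc 0 x)), HasDerivAt h (ρ t) t :=
      ae_restrict_of_ae hmono.ae_hasDerivAt
    have h2 : ∀ᵐ t ∂(volume.restrict (Ioc 0 x)),
        (∀ i, HasDerivAt (fun s => w s i) (w' t i) t) ∧ w' t ≤ F (w t) t := by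
      exact ae_restrict_of_ae_restrict_of_subset hsub hderiv
    have h3 : ∀ᵐ t ∂(volume.restrict (Ioc 0 x)), t ∈ Ioc (0:ℝ) x :=
      ae_restrict_mem measurableSet_Ioc
    have h4 : ∀ᵐ t ∂(volume.restrict (Ioc 0 x)), t ≠ x := by
      refine ae_restrict_of_ae ?_
      rw [ae_iff]
      simp only [ne_eq, not_not]
      simpa using Real.volume_singleton (a := x)
    filter_upwards [h1, h2, h3, h4] with t hht hwd htmem htne
    obtain ⟨hwderiv, hwle⟩ := hwd
    have htx : t < x := lt_of_le_of_ne htmem.2 htne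
    have htIco : t ∈ Ico (0:ℝ) b := ⟨htmem.1.le, lt_of_le_of_lt htmem.2 hxb⟩
    have hnear : G =ᶠ[nhds t] g := by
      filter_upwards [Ioo_mem_nhds htmem.1 htx] with s hs using hGeq s ⟨hs.1.le, hs.2.le⟩
    have hgd : HasDerivAt g ((K : ℝ) - ρ t) t := by
      have hGd : HasDerivAt G ((K : ℝ) - ρ t) t := by
        have := ((hasDerivAt_id t).const_mul (K : ℝ)).sub hht
        simp only [mul_one] at this
        rw [show G = (fun y => (K : ℝ) * id y) - h by funext s; simp only [hhdef, id_eq, Pi.sub_apply]; ring]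
        exact this
      exact hGd.congr_of_eventuallyEq hnear.symm
    -- index attaining the max
    have hnn := hnonneg t htIco
    obtain ⟨k, -, hk⟩ := Finset.exists_max_image (Finset.univ : Finset (Fin N))
      (fun i => w t i) ⟨⟨0, hN⟩, Finset.mem_univ _⟩
    have hks : ∀ s : ℝ, w s k ≤ g s := fun s =>
      le_trans (le_abs_self _) (by rw [← Real.norm_eq_abs]; exact norm_le_pi_norm (w s) k)
    have hgt : g t = w t k := by
      refine le_antisymm ?_ (hks t)
      refine (pi_norm_le_iff_of_nonneg (hnn k)).2 fun i => ?_
      rw [Real.norm_eq_abs, abs_of_nonneg (hnn i)]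
      exact hk i (Finset.mem_univ i)
    have hφd : HasDerivAt (fun s => g s - w s k) (((K : ℝ) - ρ t) - w' t k) t :=
      hgd.sub (hwderiv k)
    have hmin : IsLocalMin (fun s => g s - w s k) t :=
      Filter.Eventually.of_forall fun s => by
        have h1 := hks s
        simp only [hgt]
        linarith
    have hzero := hmin.hasDerivAt_eq_zero hφd
    have hFk : F (w t) t k ≤ C * ‖w t‖ := hgrow t htIco (w t) hnn k
    have hwk : w' t k ≤ F (w t) t k := hwle k
    have heq : (K : ℝ) - ρ t = w' t k := by linarith [sub_eq_zero.1 hzero]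
    have : g t = ‖w t‖ := rfl
    linarith
  -- integral form of the inequality
  have hkey : ∀ z ∈ Icc 0 x, g z ≤ g 0 + ∫ t in Ioc 0 z, C * g t := by
    intro z hz
    have hzsub : Ioc 0 z ⊆ Ioc 0 x := Ioc_subset_Ioc_right hz.2
    obtain ⟨hint, hle⟩ := monotone_continuous_integral_rnDeriv_le hmono hcont hz.1
    have haez : ∀ᵐ t ∂(volume.restrict (Ioc 0 z)), (K : ℝ) - C * g t ≤ ρ t :=
      ae_restrict_of_ae_restrict_of_subset hzsub hae
    have hint2 : IntegrableOn (fun t => (K : ℝ) - C * g t) (Ioc 0 z) :=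
      (continuous_const.sub (continuous_const.mul hgc)).integrableOn_Ioc
    have hcomp : ∫ t in Ioc 0 z, ((K : ℝ) - C * g t) ≤ ∫ t in Ioc 0 z, ρ t :=
      integral_mono_ae hint2 hint haez
    have hint3 : IntegrableOn (fun t => C * g t) (Ioc 0 z) :=
      (continuous_const.mul hgc).integrableOn_Ioc
    rw [integral_sub (integrableOn_const (C := (K : ℝ)) (s := Ioc 0 z) (μ := volume) (by
      rw [Real.volume_Ioc]; exact ENNReal.ofReal_ne_top)) hint3] at hcomp
    have hconst : ∫ _t in Ioc 0 z, (K : ℝ) = (K : ℝ) * z := by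
      rw [setIntegral_const, Real.volume_real_Ioc_of_le hz.1, sub_zero,
        smul_eq_mul, mul_comm]
    rw [hconst] at hcomp
    have hhz : h z - h 0 = (K : ℝ) * z - g z + g 0 := by
      have e1 : G z = g z := hGeq z hz
      have e2 : G 0 = g 0 := hGeq 0 ⟨le_refl 0, hx0⟩
      simp only [hhdef, e1, e2]
      ring
    rw [hhz] at hle
    linarith
  -- Gronwall
  set H : ℝ → ℝ := fun z => g 0 + ∫ t in (0:ℝ)..z, C * g t with hHdef
  have hHd : ∀ z, HasDerivAt H (C * g z) z := fun z =>
    (((continuous_const.mul hgc).integral_hasStrictDerivAt 0 z).hasDerivAt).const_add (g 0)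
  have hgH : ∀ z ∈ Icc 0 x, g z ≤ H z := by
    intro z hz
    have := hkey z hz
    simp only [hHdef]
    rwa [intervalIntegral.integral_of_le hz.1]
  have hcontH : ContinuousOn H (Icc 0 x) := fun z _ =>
    (hHd z).continuousAt.continuousWithinAt
  have hH0 : ‖H 0‖ ≤ ‖w 0‖ := by
    have : H 0 = g 0 := by simp [hHdef]
    rw [this, Real.norm_eq_abs, abs_of_nonneg (hgnn 0)]
  have hboundH : ∀ z ∈ Ico 0 x, ‖C * g z‖ ≤ C * ‖H z‖ + 0 := by
    intro z hz
    rw [add_zero, Real.norm_eq_abs, abs_of_nonneg (mul_nonneg hC.le (hgnn z)),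
      Real.norm_eq_abs]
    have h1 : g z ≤ H z := hgH z ⟨hz.1, hz.2.le⟩
    have h2 : H z ≤ |H z| := le_abs_self _
    exact mul_le_mul_of_nonneg_left (by linarith) hC.le
  have hgron := norm_le_gronwallBound_of_norm_deriv_right_le hcontH
    (fun z _ => (hHd z).hasDerivWithinAt) hH0 hboundH x (right_mem_Icc.2 hx0)
  rw [gronwallBound_ε0, sub_zero] at hgron
  have hfin1 : ‖w x‖ ≤ ‖H x‖ := by
    have h1 : g x ≤ H x := hgH x (right_mem_Icc.2 hx0)
    have : g x = ‖w x‖ := rfl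
    calc ‖w x‖ = g x := rfl
      _ ≤ H x := h1
      _ ≤ |H x| := le_abs_self _
      _ = ‖H x‖ := (Real.norm_eq_abs _).symm
  have hexp : Real.exp (C * x) ≤ Real.exp (C * b) :=
    Real.exp_le_exp.2 (mul_le_mul_of_nonneg_left hxb.le hC.le)
  calc ‖w x‖ ≤ ‖H x‖ := hfin1
    _ ≤ ‖w 0‖ * Real.exp (C * x) := hgron
    _ ≤ ‖w 0‖ * Real.exp (C * b) := mul_le_mul_of_nonneg_left hexp (norm_nonneg _)
end

section
/- Let F : ℝ^N → ℝ^N be concave in the sense that F(α₁u + α₂v) ≤ α₁F(u) + α₂F(v) for all α₁, α₂ ≥ 1 and u, v ∈ ℝ^N, and suppose F satisfies the Kamke–Müller condition. If v(x) is a lower solution and u(x) is an upper solution of w' = F(w) on [0,b), then v(x) − u(x) is a lower solution of the same system. -/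
open Set MeasureTheory

/-- For a concave cooperative vector field, the difference of a lower solution and an upper
solution is again a lower solution. -/
theorem lower_sub_upper_is_lower {N : ℕ} {b : ℝ}
    (F : (Fin N → ℝ) → (Fin N → ℝ))
    (hconcave : ∀ α₁ α₂ : ℝ, 1 ≤ α₁ → 1 ≤ α₂ → ∀ u v : Fin N → ℝ,
      F (α₁ • u + α₂ • v) ≤ α₁ • F u + α₂ • F v)
    (hKM : ∀ u v : Fin N → ℝ, u ≤ v → ∀ k, u k = v k → F u k ≤ F v k)
    (u u' v v' : ℝ → Fin N → ℝ)
    (hu : LocallyLipschitz u) (hv : LocallyLipschitz v)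
    (huderiv : ∀ᵐ x ∂(volume.restrict (Ico (0:ℝ) b)),
      (∀ i, HasDerivAt (fun t => u t i) (u' x i) x) ∧ F (u x) ≤ u' x)
    (hvderiv : ∀ᵐ x ∂(volume.restrict (Ico (0:ℝ) b)),
      (∀ i, HasDerivAt (fun t => v t i) (v' x i) x) ∧ v' x ≤ F (v x)) :
    LocallyLipschitz (fun x => v x - u x) ∧
    (∀ᵐ x ∂(volume.restrict (Ico (0:ℝ) b)),
      (∀ i, HasDerivAt (fun t => v t i - u t i) (v' x i - u' x i) x) ∧
        (fun i => v' x i - u' x i) ≤ F (v x - u x)) := by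
  constructor
  · exact hv.sub hu
  · filter_upwards [huderiv, hvderiv] with x hx hx'
    obtain ⟨hud, huF⟩ := hx
    obtain ⟨hvd, hvF⟩ := hx'
    refine ⟨fun i => (hvd i).sub (hud i), fun i => show v' x i - u' x i ≤ _ from ?_⟩
    have key := hconcave 1 1 le_rfl le_rfl (v x - u x) (u x)
    simp only [one_smul, sub_add_cancel] at key
    have h1 : v' x i ≤ F (v x) i := hvF i
    have h2 : F (u x) i ≤ u' x i := huF i
    have h3 : F (v x) i ≤ F (v x - u x) i + F (u x) i := by
      simpa using key i
    linarith
end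

section
/- Let F : ℝ^N × [0,b) → ℝ^N satisfy the Kamke–Müller condition, be concave (F(α₁u+α₂v,x) ≤ α₁F(u,x)+α₂F(v,x) for α₁,α₂ ≥ 1), F(0,x)=0, and satisfy the linear growth bound max_k F_k(w,x) ≤ C‖w‖_∞ on ℝ^N_+. If u and v are solutions of w' = F(w,x) with u(0), v(0) ∈ ℝ^N_+, then sup_{x∈[0,b)} ‖v(x) − u(x)‖_∞ ≤ e^{Cb} ‖v(0) − u(0)‖_∞. -/
open Set Filter Topology

/-- Lipschitz dependence of solutions on nonnegative initial data for concave
cooperative systems with linear growth bound. -/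
theorem solutions_lipschitz_dependence {N : ℕ} {b C : ℝ} (hC : 0 < C)
    (F : (Fin N → ℝ) → ℝ → (Fin N → ℝ))
    (hKM : ∀ x ∈ Ico (0:ℝ) b, ∀ u v : Fin N → ℝ, u ≤ v → ∀ k, u k = v k →
      F u x k ≤ F v x k)
    (hconcave : ∀ x ∈ Ico (0:ℝ) b, ∀ α₁ α₂ : ℝ, 1 ≤ α₁ → 1 ≤ α₂ →
      ∀ u v : Fin N → ℝ, F (α₁ • u + α₂ • v) x ≤ α₁ • F u x + α₂ • F v x)
    (hF0 : ∀ x ∈ Ico (0:ℝ) b, F 0 x = 0)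
    (hgrow : ∀ x ∈ Ico (0:ℝ) b, ∀ w : Fin N → ℝ, 0 ≤ w → ∀ k, F w x k ≤ C * ‖w‖)
    (u v : ℝ → Fin N → ℝ)
    (husol : ∀ x ∈ Ico (0:ℝ) b, ∀ i, HasDerivAt (fun t => u t i) (F (u x) x i) x)
    (hvsol : ∀ x ∈ Ico (0:ℝ) b, ∀ i, HasDerivAt (fun t => v t i) (F (v x) x i) x)
    (hu0 : 0 ≤ u 0) (hv0 : 0 ≤ v 0) :
    ∀ x ∈ Ico (0:ℝ) b, ‖v x - u x‖ ≤ Real.exp (C * b) * ‖v 0 - u 0‖ := by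
  intro x₀ hx₀
  obtain ⟨hx₀0, hx₀b⟩ := hx₀
  rcases Nat.eq_zero_or_pos N with hN | hN
  · have hz : v x₀ - u x₀ = 0 := by
      subst hN; exact Subsingleton.elim _ _
    rw [hz, norm_zero]
    positivity
  haveI : Nonempty (Fin N) := Fin.pos_iff_nonempty.mp hN
  set f : ℝ → ℝ := fun t => ‖v t - u t‖ with hfdef
  -- key one-sided estimate
  have key : ∀ t ∈ Ico (0:ℝ) b, ∀ p q : Fin N → ℝ, ∀ k, p k - q k = ‖p - q‖ →
      F p t k ≤ F q t k + C * ‖p - q‖ := by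
    intro t ht p q k hk
    set m := ‖p - q‖ with hm
    have hm0 : 0 ≤ m := norm_nonneg _
    have hle : p ≤ q + fun _ => m := by
      intro i
      have h1 : ‖(p - q) i‖ ≤ m := norm_le_pi_norm (p - q) i
      have h2 : p i - q i ≤ |p i - q i| := le_abs_self _
      have h3 : |p i - q i| ≤ m := by simpa [Real.norm_eq_abs] using h1
      have h4 : p i - q i ≤ m := le_trans h2 h3
      simpa [Pi.add_apply] using by linarith
    have hKMk : F p t k ≤ F (q + fun _ => m) t k := by
      apply hKM t ht p _ hle k
      simp only [Pi.add_apply]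
      linarith
    have hsub : F (q + fun _ => m) t k ≤ F q t k + F (fun _ => m) t k := by
      have h := hconcave t ht 1 1 le_rfl le_rfl q (fun _ => m)
      simpa using h k
    have hgr : F (fun _ => m) t k ≤ C * m := by
      have h := hgrow t ht (fun _ => m) (fun i => hm0) k
      rwa [pi_norm_const, Real.norm_of_nonneg hm0] at h
    linarith
  -- continuity
  have hfc : ∀ t ∈ Ico (0:ℝ) b, ContinuousAt f t := by
    intro t ht
    have hd : ContinuousAt (fun z => v z - u z) t := by
      apply continuousAt_pi.2
      intro i
      exact ((hvsol t ht i).continuousAt).sub ((husol t ht i).continuousAt)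
    exact hd.norm
  have hsubI : Icc (0:ℝ) x₀ ⊆ Ico 0 b := fun t ht => ⟨ht.1, lt_of_le_of_lt ht.2 hx₀b⟩
  have hcontf : ContinuousOn f (Icc 0 x₀) := fun t ht =>
    (hfc t (hsubI ht)).continuousWithinAt
  -- Dini condition
  have dini : ∀ t ∈ Ico (0:ℝ) x₀, ∀ r, C * f t < r →
      ∃ᶠ z in 𝓝[>] t, (z - t)⁻¹ * (f z - f t) < r := by
    intro t ht r hr
    have htb : t ∈ Ico (0:ℝ) b := ⟨ht.1, ht.2.trans hx₀b⟩
    -- attainment of the sup norm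
    have attain : ∀ g : Fin N → ℝ, ∃ j, ‖g‖ = |g j| := by
      intro g
      obtain ⟨j, -, hj⟩ := Finset.exists_mem_eq_sup Finset.univ Finset.univ_nonempty
        (fun i => ‖g i‖₊)
      refine ⟨j, ?_⟩
      rw [Pi.norm_def, hj, coe_nnnorm, Real.norm_eq_abs]
    -- find an index attaining the norm frequently to the right of t
    have hA : ∃ j, ∃ᶠ z in 𝓝[>] t, f z = |v z j - u z j| := by
      by_contra hcon
      push_neg at hcon
      have h' : ∀ᶠ z in 𝓝[>] t, ∀ j, f z ≠ |v z j - u z j| := by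
        rw [eventually_all]
        intro j
        simpa [Filter.not_frequently] using hcon j
      obtain ⟨z, hz⟩ := h'.exists
      obtain ⟨j, hj⟩ := attain (v z - u z)
      exact hz j (by simpa using hj)
    obtain ⟨j, hfreq⟩ := hA
    set l : Filter ℝ := 𝓝[>] t ⊓ Filter.principal {z | f z = |v z j - u z j|} with hl
    haveI hlne : l.NeBot := frequently_iff_neBot.mp hfreq
    have hll : l ≤ 𝓝[>] t := inf_le_left
    have hlnhds : l ≤ 𝓝 t := hll.trans nhdsWithin_le_nhds
    have hlpunct : l ≤ 𝓝[≠] t :=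
      hll.trans (nhdsWithin_mono _ fun z hz => ne_of_gt hz)
    have heql : ∀ᶠ z in l, f z = |v z j - u z j| := by
      rw [hl, eventually_inf_principal]
      exact Filter.Eventually.of_forall fun z hz => hz
    have hgt : ∀ᶠ z in l, t < z := by
      have h : ∀ᶠ z in 𝓝[>] t, t < z := self_mem_nhdsWithin
      exact h.filter_mono hll
    -- j attains the norm at t too
    have hBt : f t = |v t j - u t j| := by
      have hl1 : Filter.Tendsto f l (𝓝 (f t)) := (hfc t htb).tendsto.mono_left hlnhds
      have hcg : ContinuousAt (fun z => |v z j - u z j|) t :=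
        (((hvsol t htb j).continuousAt).sub ((husol t htb j).continuousAt)).abs
      have hl2 : Filter.Tendsto f l (𝓝 |v t j - u t j|) :=
        (hcg.tendsto.mono_left hlnhds).congr' (heql.mono fun z hz => hz.symm)
      exact tendsto_nhds_unique hl1 hl2
    have hft0 : 0 ≤ f t := norm_nonneg _
    -- generic positive case
    have main : ∀ p q : ℝ → Fin N → ℝ,
        HasDerivAt (fun z => p z j) (F (p t) t j) t →
        HasDerivAt (fun z => q z j) (F (q t) t j) t →
        (∀ z, |p z j - q z j| = |v z j - u z j|) →
        f t = ‖p t - q t‖ →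
        0 < p t j - q t j →
        f t = p t j - q t j →
        ∃ᶠ z in 𝓝[>] t, (z - t)⁻¹ * (f z - f t) < r := by
      intro p q hp hq habs hnormt hpos hftval
      have hDle : F (p t) t j ≤ F (q t) t j + C * f t := by
        have hkey := key t htb (p t) (q t) j (by rw [← hnormt, ← hftval])
        rwa [← hnormt] at hkey
      have hd : HasDerivAt (fun z => p z j - q z j) (F (p t) t j - F (q t) t j) t :=
        hp.sub hq
      have hslope : Filter.Tendsto (slope (fun z => p z j - q z j) t) l
          (𝓝 (F (p t) t j - F (q t) t j)) :=
        (hasDerivAt_iff_tendsto_slope.mp hd).mono_left hlpunct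
      have hev : ∀ᶠ z in l, slope (fun z => p z j - q z j) t z < r :=
        hslope.eventually_lt_const (by linarith)
      have hposn : ∀ᶠ z in l, 0 < p z j - q z j :=
        (hd.continuousAt.eventually (eventually_gt_nhds hpos)).filter_mono hlnhds
      have hfin : ∀ᶠ z in l, (z - t)⁻¹ * (f z - f t) < r := by
        filter_upwards [heql, hposn, hgt, hev] with z h1 h2 h3 h4
        have h5 : f z = p z j - q z j := by rw [h1, ← habs z, abs_of_pos h2]
        calc (z - t)⁻¹ * (f z - f t) = slope (fun z => p z j - q z j) t z := by
              rw [slope_def_field, h5, hftval, div_eq_inv_mul]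
        _ < r := h4
      exact (hfin.frequently).filter_mono hll
    rcases lt_trichotomy (v t j - u t j) 0 with hneg | hzero | hpos
    · refine main (fun z => u z) (fun z => v z) (husol t htb j) (hvsol t htb j)
        (fun z => abs_sub_comm _ _) (by rw [hfdef]; simp [norm_sub_rev])
        (by linarith) ?_
      rw [hBt, abs_of_neg hneg]; ring
    · -- zero case
      have hft : f t = 0 := by rw [hBt, hzero, abs_zero]
      have hr0 : 0 < r := by rw [hft, mul_zero] at hr; exact hr
      have hvu : v t = u t := by
        have : ‖v t - u t‖ = 0 := hft
        rw [norm_eq_zero, sub_eq_zero] at this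
        exact this
      have hd : HasDerivAt (fun z => v z j - u z j) 0 t := by
        have h := (hvsol t htb j).sub (husol t htb j)
        rwa [hvu, sub_self] at h
      have hslope : Filter.Tendsto (slope (fun z => v z j - u z j) t) l (𝓝 0) :=
        (hasDerivAt_iff_tendsto_slope.mp hd).mono_left hlpunct
      have habs : Filter.Tendsto (fun z => |slope (fun z => v z j - u z j) t z|) l (𝓝 0) := by
        simpa using hslope.abs
      have hev : ∀ᶠ z in l, |slope (fun z => v z j - u z j) t z| < r :=
        habs.eventually_lt_const hr0
      have hfin : ∀ᶠ z in l, (z - t)⁻¹ * (f z - f t) < r := by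
        filter_upwards [heql, hgt, hev] with z h1 h3 h4
        calc (z - t)⁻¹ * (f z - f t)
            = |slope (fun z => v z j - u z j) t z| := by
              rw [slope_def_field, h1, hft, sub_zero, hzero, sub_zero, abs_div,
                abs_of_pos (sub_pos.mpr h3), div_eq_inv_mul]
        _ < r := h4
      exact (hfin.frequently).filter_mono hll
    · refine main (fun z => v z) (fun z => u z) (hvsol t htb j) (husol t htb j)
        (fun z => rfl) rfl hpos ?_
      rw [hBt, abs_of_pos hpos]
  -- Grönwall
  have hg := le_gronwallBound_of_liminf_deriv_right_le (f := f) (f' := fun t => C * f t)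
    (δ := f 0) (K := C) (ε := 0) (a := 0) (b := x₀) hcontf dini le_rfl
    (fun t ht => by rw [add_zero])
  have hx := hg x₀ ⟨hx₀0, le_rfl⟩
  rw [sub_zero, gronwallBound_ε0] at hx
  calc ‖v x₀ - u x₀‖ = f x₀ := rfl
  _ ≤ f 0 * Real.exp (C * x₀) := hx
  _ ≤ Real.exp (C * b) * ‖v 0 - u 0‖ := by
      rw [mul_comm]
      have h1 : Real.exp (C * x₀) ≤ Real.exp (C * b) :=
        Real.exp_le_exp.mpr (mul_le_mul_of_nonneg_left hx₀b.le hC.le)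
      exact mul_le_mul h1 le_rfl (norm_nonneg _) (Real.exp_pos _).le
end

section
/- For t > 0 and a family of continuous functions M_i(·,a) : ℝ_+ → ℝ_+ (i = 1,…,N), each nondecreasing, define M̃(t,a) = (1/t)·min{ Σᵢ ξᵢ Mᵢ(ξᵢ,a) : ξ ∈ ℝ^N_+, Σᵢ ξᵢ = t }. Then M̃(t,a) is nondecreasing in t > 0, and lim_{t→0⁺} M̃(t,a) = min_i M_i(0,a). -/
open Set

/-- The normalized simplex-minimum `M̃(t,a)`. -/
noncomputable def Mtilde {N : ℕ} (M : Fin N → ℝ → ℝ → ℝ) (t a : ℝ) : ℝ :=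
  (1 / t) * sInf {y : ℝ | ∃ ξ : Fin N → ℝ, 0 ≤ ξ ∧ (∑ i, ξ i) = t ∧
    y = ∑ i, ξ i * M i (ξ i) a}

/-- `M̃(t,a)` is nondecreasing in `t > 0` and tends to `min_i M_i(0,a)` as `t → 0⁺`. -/
theorem Mtilde_monotone_and_limit {N : ℕ} [NeZero N]
    (M : Fin N → ℝ → ℝ → ℝ) (a : ℝ)
    (hcont : ∀ i, Continuous (fun v => M i v a))
    (hnonneg : ∀ i v, 0 ≤ v → 0 ≤ M i v a)
    (hmono : ∀ i, MonotoneOn (fun v => M i v a) (Ici (0:ℝ))) :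
    MonotoneOn (fun t => Mtilde M t a) (Ioi (0:ℝ)) ∧
    Filter.Tendsto (fun t => Mtilde M t a) (nhdsWithin 0 (Ioi (0:ℝ)))
      (nhds (⨅ i, M i 0 a)) := by
  haveI : Nonempty (Fin N) := Fin.pos_iff_nonempty.mp (Nat.pos_of_ne_zero (NeZero.ne N))
  obtain ⟨i₀, hi₀⟩ := Finite.exists_min (fun i => M i 0 a)
  set m := ⨅ i, M i 0 a with hm
  have hmeq : m = M i₀ 0 a :=
    le_antisymm (ciInf_le (Finite.bddBelow_range _) i₀) (le_ciInf hi₀)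
  set S : ℝ → Set ℝ := fun t => {y : ℝ | ∃ ξ : Fin N → ℝ, 0 ≤ ξ ∧ (∑ i, ξ i) = t ∧
    y = ∑ i, ξ i * M i (ξ i) a} with hS
  have hMt : ∀ t, Mtilde M t a = (1/t) * sInf (S t) := fun t => rfl
  -- the "all mass at i₀" point
  have hmem : ∀ t : ℝ, 0 ≤ t → (t * M i₀ t a) ∈ S t := by
    intro t ht
    refine ⟨fun j => if j = i₀ then t else 0, ?_, ?_, ?_⟩
    · intro j
      simp only [Pi.zero_apply]
      split <;> simp [ht]
    · simp [Finset.sum_ite_eq']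
    · rw [Finset.sum_eq_single i₀]
      · simp
      · intro j _ hj; simp [hj]
      · simp
  -- lower bound
  have hlb : ∀ t : ℝ, ∀ y ∈ S t, t * m ≤ y := by
    rintro t y ⟨ξ, hξ0, hξsum, rfl⟩
    calc t * m = ∑ i, ξ i * m := by rw [← hξsum, Finset.sum_mul]
      _ ≤ ∑ i, ξ i * M i (ξ i) a := by
          apply Finset.sum_le_sum
          intro i _
          have h0 : (0:ℝ) ≤ ξ i := hξ0 i
          have hmi : m ≤ M i (ξ i) a := by
            refine le_trans (ciInf_le (Finite.bddBelow_range _) i) ?_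
            exact hmono i self_mem_Ici h0 h0
          exact mul_le_mul_of_nonneg_left hmi h0
  have hbdd : ∀ t : ℝ, BddBelow (S t) := fun t => ⟨t * m, hlb t⟩
  have hm0 : 0 ≤ m := hmeq ▸ hnonneg i₀ 0 le_rfl
  constructor
  · -- monotone
    intro s hs t ht hst
    have hs0 : (0:ℝ) < s := hs
    have ht0 : (0:ℝ) < t := ht
    have key : t / s * sInf (S s) ≤ sInf (S t) := by
      apply le_csInf ⟨_, hmem t ht0.le⟩
      rintro y ⟨ξ, hξ0, hξsum, rfl⟩
      have hratio0 : (0:ℝ) ≤ s / t := by positivity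
      have hratio1 : s / t ≤ 1 := by
        rw [div_le_one ht0]; exact hst
      have hmem' : (∑ i, (s/t * ξ i) * M i (s/t * ξ i) a) ∈ S s := by
        refine ⟨fun i => s/t * ξ i, ?_, ?_, rfl⟩
        · intro i
          simp only [Pi.zero_apply]
          exact mul_nonneg hratio0 (hξ0 i)
        · rw [← Finset.mul_sum, hξsum]
          field_simp
      have h1 : sInf (S s) ≤ ∑ i, (s/t * ξ i) * M i (s/t * ξ i) a :=
        csInf_le (hbdd s) hmem'
      have h2 : ∑ i, (s/t * ξ i) * M i (s/t * ξ i) a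
          ≤ s/t * ∑ i, ξ i * M i (ξ i) a := by
        rw [Finset.mul_sum]
        apply Finset.sum_le_sum
        intro i _
        have h0 : (0:ℝ) ≤ ξ i := hξ0 i
        have h0' : (0:ℝ) ≤ s/t * ξ i := mul_nonneg hratio0 h0
        have hle : s/t * ξ i ≤ ξ i := by
          nlinarith
        have hMle : M i (s/t * ξ i) a ≤ M i (ξ i) a := hmono i h0' h0 hle
        calc (s/t * ξ i) * M i (s/t * ξ i) a
            = s/t * (ξ i * M i (s/t * ξ i) a) := by ring
          _ ≤ s/t * (ξ i * M i (ξ i) a) := by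
              apply mul_le_mul_of_nonneg_left _ hratio0
              exact mul_le_mul_of_nonneg_left hMle h0
      have := le_trans h1 h2
      calc t/s * sInf (S s) ≤ t/s * (s/t * ∑ i, ξ i * M i (ξ i) a) := by
            apply mul_le_mul_of_nonneg_left (le_trans h1 h2) (by positivity)
        _ = ∑ i, ξ i * M i (ξ i) a := by field_simp
    show (1/s) * sInf (S s) ≤ (1/t) * sInf (S t)
    have := mul_le_mul_of_nonneg_left key (le_of_lt (show (0:ℝ) < 1/t by positivity))
    calc (1/s) * sInf (S s) = 1/t * (t/s * sInf (S s)) := by field_simp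
      _ ≤ 1/t * sInf (S t) := this
  · -- limit
    have hupper : ∀ t ∈ Ioi (0:ℝ), Mtilde M t a ≤ M i₀ t a := by
      intro t ht
      have h : sInf (S t) ≤ t * M i₀ t a := csInf_le (hbdd t) (hmem t (le_of_lt ht))
      have ht0 : (0:ℝ) < t := ht
      calc Mtilde M t a = 1/t * sInf (S t) := hMt t
        _ ≤ 1/t * (t * M i₀ t a) := mul_le_mul_of_nonneg_left h (by positivity)
        _ = M i₀ t a := by field_simp
    have hlower : ∀ t ∈ Ioi (0:ℝ), m ≤ Mtilde M t a := by
      intro t ht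
      have ht0 : (0:ℝ) < t := ht
      have h : t * m ≤ sInf (S t) := le_csInf ⟨_, hmem t (le_of_lt ht)⟩ (hlb t)
      calc m = 1/t * (t * m) := by field_simp
        _ ≤ 1/t * sInf (S t) := mul_le_mul_of_nonneg_left h (by positivity)
        _ = Mtilde M t a := (hMt t).symm
    have htop : Filter.Tendsto (fun t => M i₀ t a) (nhdsWithin 0 (Ioi (0:ℝ))) (nhds m) := by
      rw [hmeq]
      exact ((hcont i₀).tendsto 0).mono_left nhdsWithin_le_nhds
    refine tendsto_of_tendsto_of_tendsto_of_le_of_le' tendsto_const_nhds htop ?_ ?_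
    · filter_upwards [self_mem_nhdsWithin] with t ht using hlower t ht
    · filter_upwards [self_mem_nhdsWithin] with t ht using hupper t ht
end
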